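/- arXiv:2108.08107 — 4 statements merged into one kernel-verified Lean document; each statement's English description precedes it below -/
import Mathlib

section
/- Let V be a finite-dimensional vector space over a field K, M a linear endomorphism of V, and (P, ≤) a finite partially ordered set. Suppose (v_p)_{p ∈ P} is a spanning family of V such that M v_p = ∑_{q ≥ p} c_{pq} v_q for coefficients c_{pq} ∈ K, and c_{pp} = 1 if and only if p is maximal in P. Then the fixed subspace {v ∈ V : Mv = v} is spanned by the v_p with p maximal. -/
/-!
Let `S` be the span of the `v p` with `p` maximal. Since `c p p = 1` at maximal `p`, `M` fixes `S`
pointwise, so `S ≤ ker (M - 1)`. At a non-maximal `p` the coefficient `c p p - 1` is invertible,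
so `v p` lies in `range (M - 1)` plus the span of the `v q` with `q > p`; downward induction on the
finite poset gives `range (M - 1) ⊔ S = ⊤`. Rank–nullity then forces `ker (M - 1) = S`.
-/

open scoped Classical

open Submodule LinearMap

theorem LinearMap.ker_eq_of_le_ker_of_range_sup_eq_top {K V : Type*} [DivisionRing K]
    [AddCommGroup V] [Module K V] [FiniteDimensional K V] {f : V →ₗ[K] V} {S : Submodule K V}
    (hS : S ≤ ker f) (htop : range f ⊔ S = ⊤) : ker f = S := by
  refine (eq_of_le_of_finrank_le hS ?_).symm
  have hrank := finrank_range_add_finrank_ker f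
  have hsup := finrank_add_le_finrank_add_finrank (range f) S
  rw [htop, finrank_top] at hsup
  omega

theorem Submodule.apply_mem_of_forall_mem_sup_span_image_Ioi {R M P : Type*} [Semiring R]
    [AddCommMonoid M] [Module R M] [Preorder P] [WellFoundedGT P] {v : P → M}
    {T : Submodule R M} (h : ∀ p, v p ∈ T ⊔ span R (v '' Set.Ioi p)) (p : P) : v p ∈ T := by
  induction p using WellFoundedGT.induction with
  | _ p ih =>
    have hle : span R (v '' Set.Ioi p) ≤ T := span_le.2 <| by
      rintro _ ⟨q, hq, rfl⟩
      exact ih q hq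
    simpa [sup_eq_left.2 hle] using h p

theorem LinearMap.mem_range_sup_of_apply_eq_smul_add {K V : Type*} [DivisionRing K]
    [AddCommGroup V] [Module K V] {f : V →ₗ[K] V} {T : Submodule K V} {x y : V} {a : K}
    (ha : a ≠ 0) (hy : y ∈ T) (hfx : f x = a • x + y) : x ∈ range f ⊔ T := by
  have hx : x = a⁻¹ • (f x - y) := by rw [hfx, add_sub_cancel_right, inv_smul_smul₀ ha]
  rw [hx]
  exact smul_mem _ _ (sub_mem (mem_sup_left (mem_range_self f x)) (mem_sup_right hy))

theorem Finset.sum_filter_le_eq_add_sum_filter_lt {P M : Type*} [Fintype P] [PartialOrder P]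
    [AddCommMonoid M] (f : P → M) (p : P) :
    ∑ q ∈ univ.filter (p ≤ ·), f q = f p + ∑ q ∈ univ.filter (p < ·), f q := by
  have hdisj : Disjoint ({p} : Finset P) (univ.filter (p < ·)) := by simp
  simp_rw [le_iff_eq_or_lt, filter_or, filter_eq, if_pos (mem_univ p), sum_union hdisj,
    sum_singleton]

/-- Nebe–Rains–Sloane, Lemma 5.5.10: if an endomorphism `M` acts
triangularly on a spanning family indexed by a finite poset, with diagonal coefficient `1`
exactly at the maximal indices, then the fixed space of `M` is spanned by the vectors at
maximal indices. -/
theorem stmt11 {K V : Type*} [Field K] [AddCommGroup V] [Module K V] [FiniteDimensional K V]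
    {P : Type*} [Fintype P] [PartialOrder P]
    (v : P → V) (hspan : Submodule.span K (Set.range v) = ⊤)
    (M : V →ₗ[K] V) (c : P → P → K)
    (hM : ∀ p, M (v p) = ∑ q ∈ Finset.univ.filter (fun q => p ≤ q), c p q • v q)
    (hc : ∀ p, c p p = 1 ↔ IsMax p) :
    {w : V | M w = w} = ↑(Submodule.span K (v '' {p | IsMax p})) := by
  have hMv (p : P) :
      (M - 1) (v p) = (c p p - 1) • v p + ∑ q ∈ Finset.univ.filter (p < ·), c p q • v q := by
    rw [LinearMap.sub_apply, hM, Finset.sum_filter_le_eq_add_sum_filter_lt, sub_smul, one_smul]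
    simp only [Module.End.one_apply]
    abel
  set S := span K (v '' {p | IsMax p})
  have hS : S ≤ ker (M - 1) := span_le.2 <| by
    rintro _ ⟨p, hp, rfl⟩
    simp [hMv, (hc p).2 hp, Finset.filter_false_of_mem fun q _ => hp.not_lt]
  have hstep (p : P) : v p ∈ range (M - 1) ⊔ S ⊔ span K (v '' Set.Ioi p) := by
    by_cases hp : IsMax p
    · exact mem_sup_left (mem_sup_right (subset_span ⟨p, hp, rfl⟩))
    have hmem : v p ∈ range (M - 1) ⊔ span K (v '' Set.Ioi p) :=
      mem_range_sup_of_apply_eq_smul_add (sub_ne_zero.2 fun h => hp ((hc p).1 h))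
        (sum_mem fun q hq => smul_mem _ _ (subset_span ⟨q, by simpa using hq, rfl⟩)) (hMv p)
    exact SetLike.le_def.1 (sup_le_sup_right le_sup_left _) hmem
  have htop : range (M - 1) ⊔ S = ⊤ := by
    rw [eq_top_iff, ← hspan, span_le]
    rintro _ ⟨p, rfl⟩
    exact apply_mem_of_forall_mem_sup_span_image_Ioi hstep p
  ext w
  simp [← ker_eq_of_le_ker_of_range_sup_eq_top hS htop, sub_eq_zero]
end

section
/- Let p be a prime. Then ∏_{a=1}^{p−1} η(τ + a/p) = e^{2πi(p−1)/48} · η(pτ)^{p+1} / (η(τ) · η(p²τ)) for all τ in the upper half-plane. -/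
/-- The Dedekind eta function `η(τ) = e^{πiτ/12} ∏_{n≥1} (1 - e^{2πinτ})`, as a function on
`ℂ` (intended for `τ` in the upper half-plane). -/
noncomputable def eta (τ : ℂ) : ℂ :=
  Complex.exp ((Real.pi : ℂ) * Complex.I * τ / 12) *
    ∏' n : ℕ, (1 - Complex.exp (2 * (Real.pi : ℂ) * Complex.I * ((n : ℂ) + 1) * τ))

/-!
With `q = e^{2πiτ}` and `ζ = e^{2πi/p}`, `η(τ + a/p)` is `e^{πi(τ + a/p)/12}` times the Euler
product `E(ζᵃ q)`, where `E(x) = ∏ₙ (1 - xⁿ)`. Multiplying the factors `1 - (ζᵃ q)ⁿ` over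
`a = 0, …, p - 1` gives `(1 - qⁿ)ᵖ` when `p ∣ n` and `1 - q^{pn}` otherwise; multiplying in
`E(q^{p²}) = ∏_{p ∣ n} (1 - q^{pn})` turns this into `E(q^p) · E(q^p)ᵖ`. The exponential prefactors
contribute `e^{2πi(p-1)/48}` through `∑ₐ a = p(p-1)/2`, and the term `a = 0` is `η(τ)`.
-/

open Complex hiding eta
open Finset Function
open scoped Real

namespace IsPrimitiveRoot

variable {R : Type*} [CommRing R] [IsDomain R] {n : ℕ} {ζ : R}

theorem prod_one_sub_pow_mul (hζ : IsPrimitiveRoot ζ n) (hn : 0 < n) (x : R) :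
    ∏ i ∈ range n, (1 - ζ ^ i * x) = 1 - x ^ n := by
  simpa [Polynomial.eval_prod] using
    congrArg (Polynomial.eval 1) (X_pow_sub_C_eq_prod hζ hn (rfl : x ^ n = _)).symm

theorem prod_one_sub_pow_mul_pow {p : ℕ} (hp : p.Prime) (hζ : IsPrimitiveRoot ζ p) (x : R)
    (k : ℕ) :
    ∏ i ∈ range p, (1 - (ζ ^ i * x) ^ k) = if p ∣ k then (1 - x ^ k) ^ p else 1 - (x ^ k) ^ p := by
  have hpow : ∀ i, (ζ ^ i * x) ^ k = (ζ ^ k) ^ i * x ^ k := fun i => by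
    rw [mul_pow, ← pow_mul, ← pow_mul, mul_comm i k]
  simp_rw [hpow]
  split_ifs with hk
  · simp [(hζ.pow_eq_one_iff_dvd k).2 hk]
  · exact (hζ.pow_of_coprime k ((hp.coprime_iff_not_dvd.2 hk).symm)).prod_one_sub_pow_mul
      hp.pos _

end IsPrimitiveRoot

noncomputable def eulerProd (x : ℂ) : ℂ := ∏' n : ℕ, (1 - x ^ (n + 1))

lemma norm_pow_lt_one {𝕜 : Type*} [NormedDivisionRing 𝕜] {x : 𝕜} (hx : ‖x‖ < 1) {k : ℕ}
    (hk : k ≠ 0) : ‖x ^ k‖ < 1 := by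
  rw [norm_pow]; exact pow_lt_one₀ (norm_nonneg x) hx hk

lemma mul_add_pred_add_one {p : ℕ} (hp : 0 < p) (m : ℕ) : p * m + (p - 1) + 1 = p * (m + 1) := by
  rw [add_assoc, Nat.sub_add_cancel hp, mul_add_one]

lemma injective_mul_add_pred {p : ℕ} (hp : 0 < p) : Injective fun m => p * m + (p - 1) :=
  fun _ _ hab => Nat.eq_of_mul_eq_mul_left hp (Nat.add_right_cancel hab)

/-- The indices `n` with `p ∣ n + 1` are the values `p m + (p - 1)`; extending the two families
indexed by `m` by `1` off these values makes the factorisation termwise. -/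
lemma prod_one_sub_pow_mul_pow_mul_extend {p : ℕ} (hp : p.Prime) {ζ : ℂ}
    (hζ : IsPrimitiveRoot ζ p) (q : ℂ) (n : ℕ) :
    (∏ a ∈ range p, (1 - (ζ ^ a * q) ^ (n + 1))) *
        extend (fun m => p * m + (p - 1)) (fun m => 1 - (q ^ p ^ 2) ^ (m + 1)) 1 n =
      (1 - (q ^ p) ^ (n + 1)) *
        extend (fun m => p * m + (p - 1)) (fun m => (1 - (q ^ p) ^ (m + 1)) ^ p) 1 n := by
  have hinj := injective_mul_add_pred hp.pos
  rw [hζ.prod_one_sub_pow_mul_pow hp]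
  by_cases hn : ∃ m, p * m + (p - 1) = n
  · obtain ⟨m, rfl⟩ := hn
    rw [hinj.extend_apply, hinj.extend_apply, mul_add_pred_add_one hp.pos m,
      if_pos (dvd_mul_right p _)]
    ring
  · have hndvd : ¬ p ∣ n + 1 := by
      rintro ⟨k, hk⟩
      obtain ⟨m, rfl⟩ := Nat.exists_eq_add_one_of_ne_zero (by rintro rfl; simp at hk : k ≠ 0)
      exact hn ⟨m, by have := mul_add_pred_add_one hp.pos m; omega⟩
    rw [extend_apply' _ _ _ hn, extend_apply' _ _ _ hn, if_neg hndvd]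
    ring

theorem prod_eulerProd_mul_eulerProd_pow_sq {p : ℕ} (hp : p.Prime) {ζ : ℂ}
    (hζ : IsPrimitiveRoot ζ p) {q : ℂ} (hq : ‖q‖ < 1) :
    (∏ a ∈ range p, eulerProd (ζ ^ a * q)) * eulerProd (q ^ p ^ 2) =
      eulerProd (q ^ p) ^ (p + 1) := by
  set e : ℕ → ℕ := fun m => p * m + (p - 1)
  have he : Injective e := injective_mul_add_pred hp.pos
  have hζq (a : ℕ) : ‖ζ ^ a * q‖ < 1 := by
    rwa [norm_mul, norm_pow, hζ.norm'_eq_one hp.ne_zero, one_pow, one_mul]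
  have hqp := norm_pow_lt_one hq hp.ne_zero
  have hqp2 := norm_pow_lt_one hq (pow_ne_zero 2 hp.ne_zero)
  have hprod : Multipliable fun n : ℕ => ∏ a ∈ range p, (1 - (ζ ^ a * q) ^ (n + 1)) :=
    multipliable_prod fun a _ => ModularForm.multipliable_one_sub_pow (hζq a)
  have hsq : Multipliable (extend e (fun m => 1 - (q ^ p ^ 2) ^ (m + 1)) 1) :=
    (multipliable_extend_one he).2 (ModularForm.multipliable_one_sub_pow hqp2)
  have hpow : Multipliable (extend e (fun m => (1 - (q ^ p) ^ (m + 1)) ^ p) 1) :=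
    (multipliable_extend_one he).2 ((ModularForm.multipliable_one_sub_pow hqp).pow p)
  calc (∏ a ∈ range p, eulerProd (ζ ^ a * q)) * eulerProd (q ^ p ^ 2)
      = ∏' n, (∏ a ∈ range p, (1 - (ζ ^ a * q) ^ (n + 1))) *
          extend e (fun m => 1 - (q ^ p ^ 2) ^ (m + 1)) 1 n := by
        simp only [eulerProd]
        rw [hprod.tprod_mul hsq, tprod_extend_one he,
          Multipliable.tprod_finsetProd fun a _ => ModularForm.multipliable_one_sub_pow (hζq a)]
    _ = ∏' n, (1 - (q ^ p) ^ (n + 1)) *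
          extend e (fun m => (1 - (q ^ p) ^ (m + 1)) ^ p) 1 n :=
        tprod_congr (prod_one_sub_pow_mul_pow_mul_extend hp hζ q)
    _ = eulerProd (q ^ p) ^ (p + 1) := by
        rw [(ModularForm.multipliable_one_sub_pow hqp).tprod_mul hpow, tprod_extend_one he,
          (ModularForm.multipliable_one_sub_pow hqp).tprod_pow, eulerProd, pow_succ']

lemma eta_eq_modularForm_eta : eta = ModularForm.eta := by
  ext τ
  simp only [eta, ModularForm.eta, ModularForm.eta_q_eq_cexp, Periodic.qParam]
  congr 2
  push_cast
  ring

lemma eta_eq_exp_mul_eulerProd (τ : ℂ) :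
    eta τ = exp (π * I * τ / 12) * eulerProd (exp (2 * π * I * τ)) := by
  refine congrArg _ (tprod_congr fun n => ?_)
  rw [← Complex.exp_nat_mul]
  push_cast
  ring_nf

lemma sum_range_add_div (τ : ℂ) {p : ℕ} (hp : p ≠ 0) :
    ∑ a ∈ range p, (τ + (a : ℂ) / p) = p * τ + ((p : ℂ) - 1) / 2 := by
  have hgauss : (∑ a ∈ range p, (a : ℂ)) * 2 = p * (p - 1) := by
    have := congrArg (Nat.cast (R := ℂ)) (sum_range_id_mul_two p)
    push_cast [Nat.cast_sub (Nat.one_le_iff_ne_zero.2 hp)] at this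
    exact this
  rw [sum_add_distrib, sum_const, card_range, nsmul_eq_mul, ← sum_div]
  field_simp
  linear_combination hgauss

theorem prod_range_eta_add_div_mul_eta {p : ℕ} (hp : p.Prime) {τ : ℂ} (hτ : 0 < τ.im) :
    (∏ a ∈ range p, eta (τ + (a : ℂ) / p)) * eta ((p : ℂ) ^ 2 * τ) =
      exp (2 * π * I * ((p : ℂ) - 1) / 48) * eta ((p : ℂ) * τ) ^ (p + 1) := by
  set q := exp (2 * π * I * τ)
  set ζ := exp (2 * π * I / p)
  have hζ : IsPrimitiveRoot ζ p := Complex.isPrimitiveRoot_exp p hp.ne_zero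
  have hq : ‖q‖ < 1 := by simpa using UpperHalfPlane.norm_exp_two_pi_I_lt_one ⟨τ, hτ⟩
  have hshift (a : ℕ) : exp (2 * π * I * (τ + a / p)) = ζ ^ a * q := by
    rw [← exp_nat_mul, ← exp_add]; ring_nf
  have hdil : exp (2 * π * I * ((p : ℂ) * τ)) = q ^ p := by
    rw [← exp_nat_mul]; ring_nf
  have hdil2 : exp (2 * π * I * ((p : ℂ) ^ 2 * τ)) = q ^ p ^ 2 := by
    rw [← exp_nat_mul]; push_cast; ring_nf
  have hexp :
      exp (∑ a ∈ range p, π * I * (τ + a / p) / 12) * exp (π * I * ((p : ℂ) ^ 2 * τ) / 12) =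
        exp (2 * π * I * ((p : ℂ) - 1) / 48) * exp (π * I * ((p : ℂ) * τ) / 12) ^ (p + 1) := by
    rw [← sum_div, ← mul_sum, sum_range_add_div τ hp.ne_zero, ← exp_add, ← exp_nat_mul,
      ← exp_add]
    congr 1
    push_cast
    ring
  simp only [eta_eq_exp_mul_eulerProd, hshift, prod_mul_distrib, ← exp_sum]
  rw [hdil, hdil2]
  calc _ = (exp (∑ a ∈ range p, π * I * (τ + a / p) / 12) *
          exp (π * I * ((p : ℂ) ^ 2 * τ) / 12)) *
        ((∏ a ∈ range p, eulerProd (ζ ^ a * q)) * eulerProd (q ^ p ^ 2)) := by ring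
    _ = _ := by rw [hexp, prod_eulerProd_mul_eulerProd_pow_sq hp hζ hq]; ring

/-- for a prime `p` and `τ` in the upper half-plane,
`∏_{a=1}^{p-1} η(τ + a/p) = e^{2πi(p-1)/48} η(pτ)^{p+1} / (η(τ) η(p²τ))`. -/
theorem stmt12 (p : ℕ) (hp : p.Prime) (τ : ℂ) (hτ : 0 < τ.im) :
    ∏ a ∈ Finset.Icc 1 (p - 1), eta (τ + (a : ℂ) / (p : ℂ)) =
      Complex.exp (2 * (Real.pi : ℂ) * Complex.I * ((p : ℂ) - 1) / 48) *
        eta ((p : ℂ) * τ) ^ (p + 1) / (eta τ * eta ((p : ℂ) ^ 2 * τ)) := by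
  have hne {σ : ℂ} (hσ : 0 < σ.im) : eta σ ≠ 0 := by
    rw [eta_eq_modularForm_eta]; exact ModularForm.eta_ne_zero hσ
  have hτp2 : 0 < ((p : ℂ) ^ 2 * τ).im := by
    rw [← ofReal_natCast, ← ofReal_pow, im_ofReal_mul]
    exact mul_pos (pow_pos (Nat.cast_pos.2 hp.pos) 2) hτ
  have hrange : range p = insert 0 (Icc 1 (p - 1)) := by
    ext a; simp only [mem_range, mem_insert, mem_Icc]; have := hp.pos; omega
  rw [eq_div_iff (mul_ne_zero (hne hτ) (hne hτp2)), ← prod_range_eta_add_div_mul_eta hp hτ,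
    hrange, prod_insert (by simp)]
  simp only [CharP.cast_eq_zero, zero_div, add_zero]
  ring
end

section
/- For all τ in the upper half-plane, η(τ + 1/2) = e^{2πi/48} · η(2τ)³ / (η(τ) · η(4τ)). -/
/-!
With `q = e^{2πiτ}` and Euler's function `φ(q) = ∏_{n ≥ 1} (1 - q^n)`, the claim splits into an
identity of the prefactors `e^{πiτ/12}` and the identity `φ(-q) φ(q) φ(q⁴) = φ(q²)³`.
For the latter write `φ(q) = ψ(q) φ(q²)` with `ψ(q) = ∏_{n ≥ 0} (1 - q^{2n+1})`, splitting the
factors by parity, and note `ψ(q) ψ(-q) = ψ(q²)`; then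
`φ(-q) φ(q) φ(q⁴) = ψ(q²) φ(q⁴) φ(q²)² = φ(q²)³`.
-/

open Complex hiding eta

noncomputable def eulerFun (q : ℂ) : ℂ := ∏' n : ℕ, (1 - q ^ (n + 1))

noncomputable def eulerFunOdd (q : ℂ) : ℂ := ∏' n : ℕ, (1 - q ^ (2 * n + 1))

lemma norm_pow_lt_one_s13 {R : Type*} [SeminormedRing R] {a : R} (ha : ‖a‖ < 1) {n : ℕ}
    (hn : n ≠ 0) : ‖a ^ n‖ < 1 :=
  (norm_pow_le' a (Nat.pos_of_ne_zero hn)).trans_lt (pow_lt_one₀ (norm_nonneg a) ha hn)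

section EulerFun

variable {q : ℂ}

lemma multipliable_one_sub_pow_two_mul_add_one (hq : ‖q‖ < 1) :
    Multipliable fun n : ℕ ↦ 1 - q ^ (2 * n + 1) := by
  simp_rw [sub_eq_add_neg]
  refine multipliable_one_add_of_summable ?_
  have hq2 : ‖q‖ ^ 2 < 1 := pow_lt_one₀ (norm_nonneg q) hq two_ne_zero
  refine ((summable_geometric_of_lt_one (by positivity) hq2).mul_left ‖q‖).congr fun n ↦ ?_
  rw [norm_neg, norm_pow]; ring

lemma eulerFun_ne_zero (hq : ‖q‖ < 1) : eulerFun q ≠ 0 := by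
  simp_rw [eulerFun, sub_eq_add_neg]
  refine tprod_one_add_ne_zero_of_summable (fun n h ↦ ?_) ?_
  · rw [add_neg_eq_zero] at h
    simpa [← h] using norm_pow_lt_one_s13 hq n.succ_ne_zero
  · simpa [summable_nat_add_iff] using summable_geometric_of_lt_one (norm_nonneg q) hq

lemma eulerFun_eq_eulerFunOdd_mul (hq : ‖q‖ < 1) :
    eulerFun q = eulerFunOdd q * eulerFun (q ^ 2) := by
  have hodd (k : ℕ) : q ^ (2 * k + 1 + 1) = (q ^ 2) ^ (k + 1) := by ring
  have hsplit := tprod_even_mul_odd (f := fun n ↦ 1 - q ^ (n + 1))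
    (multipliable_one_sub_pow_two_mul_add_one hq)
    (by simpa only [hodd] using
      ModularForm.multipliable_one_sub_pow (norm_pow_lt_one_s13 hq two_ne_zero))
  simp only [hodd] at hsplit
  exact hsplit.symm

lemma eulerFunOdd_mul_eulerFunOdd_neg (hq : ‖q‖ < 1) :
    eulerFunOdd q * eulerFunOdd (-q) = eulerFunOdd (q ^ 2) := by
  rw [eulerFunOdd, eulerFunOdd, ← (multipliable_one_sub_pow_two_mul_add_one hq).tprod_mul
    (multipliable_one_sub_pow_two_mul_add_one (by rwa [norm_neg]))]
  refine tprod_congr fun n ↦ ?_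
  rw [(odd_two_mul_add_one n).neg_pow]
  ring

theorem eulerFun_neg_mul_eulerFun_mul_eulerFun_pow_four (hq : ‖q‖ < 1) :
    eulerFun (-q) * eulerFun q * eulerFun (q ^ 4) = eulerFun (q ^ 2) ^ 3 := by
  have hneg := eulerFun_eq_eulerFunOdd_mul (q := -q) (by rwa [norm_neg])
  have hpos := eulerFun_eq_eulerFunOdd_mul hq
  have hsq := eulerFun_eq_eulerFunOdd_mul (norm_pow_lt_one_s13 hq two_ne_zero)
  rw [neg_sq] at hneg
  rw [← pow_mul] at hsq
  rw [hneg, hpos]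
  linear_combination eulerFun (q ^ 2) ^ 2 * eulerFun (q ^ 4) *
      eulerFunOdd_mul_eulerFunOdd_neg hq - eulerFun (q ^ 2) ^ 2 * hsq

end EulerFun

lemma eta_eq_cexp_mul_eulerFun (τ : ℂ) :
    eta τ = cexp (Real.pi * I * τ / 12) * eulerFun (cexp (2 * Real.pi * I * τ)) := by
  rw [eta, eulerFun]
  congr 1
  refine tprod_congr fun n ↦ ?_
  rw [← Complex.exp_nat_mul]
  push_cast
  ring_nf

/-- for `τ` in the upper half-plane,
`η(τ + 1/2) = e^{2πi/48} η(2τ)³ / (η(τ) η(4τ))`. -/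
theorem stmt13 (τ : ℂ) (hτ : 0 < τ.im) :
    eta (τ + 1 / 2) =
      Complex.exp (2 * (Real.pi : ℂ) * Complex.I / 48) *
        eta (2 * τ) ^ 3 / (eta τ * eta (4 * τ)) := by
  have hq : ‖cexp (2 * Real.pi * I * τ)‖ < 1 := UpperHalfPlane.norm_exp_two_pi_I_lt_one ⟨τ, hτ⟩
  have hq_half : cexp (2 * Real.pi * I * (τ + 1 / 2)) = -cexp (2 * Real.pi * I * τ) := by
    rw [mul_add, Complex.exp_add, show 2 * Real.pi * I * (1 / 2) = Real.pi * I by ring,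
      Complex.exp_pi_mul_I, mul_neg_one]
  have hq_mul (m : ℕ) : cexp (2 * Real.pi * I * (m * τ)) = cexp (2 * Real.pi * I * τ) ^ m := by
    rw [← Complex.exp_nat_mul]; ring_nf
  have hprefactor : cexp (Real.pi * I * (τ + 1 / 2) / 12) * cexp (Real.pi * I * τ / 12) *
      cexp (Real.pi * I * (4 * τ) / 12) =
      cexp (2 * Real.pi * I / 48) * cexp (Real.pi * I * (2 * τ) / 12) ^ 3 := by
    rw [← Complex.exp_nat_mul, ← Complex.exp_add, ← Complex.exp_add, ← Complex.exp_add]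
    push_cast
    ring_nf
  simp only [eta_eq_cexp_mul_eulerFun, hq_half]
  rw [show (2 : ℂ) * τ = (2 : ℕ) * τ by norm_num, show (4 : ℂ) * τ = (4 : ℕ) * τ by norm_num,
    hq_mul, hq_mul]
  generalize cexp (2 * Real.pi * I * τ) = q at hq ⊢
  rw [eq_div_iff (mul_ne_zero (mul_ne_zero (Complex.exp_ne_zero _) (eulerFun_ne_zero hq))
    (mul_ne_zero (Complex.exp_ne_zero _) (eulerFun_ne_zero (norm_pow_lt_one_s13 hq four_ne_zero))))]
  push_cast
  linear_combination eulerFun (-q) * eulerFun q * eulerFun (q ^ 4) * hprefactor +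
    cexp (2 * Real.pi * I / 48) * cexp (Real.pi * I * (2 * τ) / 12) ^ 3 *
      eulerFun_neg_mul_eulerFun_mul_eulerFun_pow_four hq
end

section
/- Let N be a positive integer, p a prime dividing N, and d' a divisor of N/p. In D = (ℤ/Nℤ)² ⊕ (ℤ/pℤ)² with quadratic form Q(x,y,z,w) = xy/N + zw/p mod ℤ, the characteristic functions of the self-dual isotropic subgroups H⁽¹⁾ = H_{d',0,N/d'} ⊕ H_{1,0,p}, H⁽²⁾ = H_{d',0,N/d'} ⊕ H_{p,0,1}, H⁽³⁾ = H_{pd',0,N/(pd')} ⊕ H_{1,0,p}, H⁽⁴⁾ = H_{pd',0,N/(pd')} ⊕ H_{p,0,1}, and H⁽⁵⁾_a, H⁽⁶⁾_a for a ∈ (ℤ/pℤ)* satisfy the linear relation v^{H⁽¹⁾} − v^{H⁽²⁾} − v^{H⁽³⁾} + v^{H⁽⁴⁾} + ∑_{a=1}^{p−1}(−v^{H⁽⁵⁾_a} + v^{H⁽⁶⁾_a}) = 0 in ℂ[D]. -/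
/-!
All eight subgroups lie in `K = ⟨d'⟩ × ⟨N/(pd')⟩ × (ℤ/p)²` and contain `⟨pd'⟩ × ⟨N/d'⟩ × 0`, and
`K` modulo the latter is `(ℤ/p)⁴` via `((m d', n N/(pd')), (y, z)) ↦ (m, n, y, z) mod p`. Off `K`
every term vanishes; on `K` membership in each subgroup is a condition on `(m, n, y, z) mod p`,
and the relation becomes `T(n, m, y, z) - T(m, n, y, z) = 0`, where `T(w, x, y, z)` counts the
points of `ℙ¹(𝔽_p)` in the kernel of `!![w, -y; z, x]`. That number only depends on whether the
matrix vanishes and on its determinant `wx + yz`, both symmetric in `w` and `x`.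
-/

open AddSubgroup

/-- The discriminant group `(ℤ/Nℤ)² ⊕ (ℤ/pℤ)²`. -/
abbrev DD (N p : ℕ) : Type := (ZMod N × ZMod N) × (ZMod p × ZMod p)

/-- The subgroup `H_{x,0,z}` of `(ℤ/Mℤ)²` generated by `(x,0)` and `(0,z)`. -/
def Hxz (M x z : ℕ) : AddSubgroup (ZMod M × ZMod M) :=
  AddSubgroup.closure {((x : ZMod M), (0 : ZMod M)), ((0 : ZMod M), (z : ZMod M))}

/-- The characteristic function `v^S = ∑_{γ ∈ S} e_γ` of a subset `S`, as an element of the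
group algebra realised as functions `D → ℂ`. -/
noncomputable def vH {D : Type*} (S : Set D) : D → ℂ := Set.indicator S 1

/-- The subgroup `H⁽⁵⁾_a` of `(ℤ/Nℤ)² ⊕ (ℤ/pℤ)²`, generated by `(d',0,a,0)`,
`(0, N/(pd'), 0, −a⁻¹)`, `(0,0,p,0)` and `(0,0,0,p)`. -/
def H5 (N p d' : ℕ) (a : (ZMod p)ˣ) : AddSubgroup (DD N p) :=
  AddSubgroup.closure
    {(((d' : ZMod N), 0), ((a : ZMod p), 0)),
     ((0, ((N / (p * d') : ℕ) : ZMod N)), (0, -((a⁻¹ : (ZMod p)ˣ) : ZMod p))),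
     ((0, 0), ((p : ZMod p), 0)),
     ((0, 0), (0, (p : ZMod p)))}

/-- The subgroup `H⁽⁶⁾_a`, defined as `H⁽⁵⁾_a` with the roles swapped: generated by
`(d',0,0,−a⁻¹)`, `(0, N/(pd'), a, 0)`, `(0,0,p,0)` and `(0,0,0,p)`. -/
def H6 (N p d' : ℕ) (a : (ZMod p)ˣ) : AddSubgroup (DD N p) :=
  AddSubgroup.closure
    {(((d' : ZMod N), 0), (0, -((a⁻¹ : (ZMod p)ˣ) : ZMod p))),
     ((0, ((N / (p * d') : ℕ) : ZMod N)), ((a : ZMod p), 0)),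
     ((0, 0), ((p : ZMod p), 0)),
     ((0, 0), (0, (p : ZMod p)))}

section Count

variable {F : Type*} [Field F] [Fintype F] [DecidableEq F] {R : Type*}

theorem sum_units_ite_mul_eq [AddCommMonoidWithOne R] {z c : F} (h : z ≠ 0 ∨ c ≠ 0) :
    ∑ a : Fˣ, (if z * a = c then (1 : R) else 0) = if z = 0 ∨ c = 0 then 0 else 1 := by
  rcases eq_or_ne z 0 with rfl | hz
  · simp [h.resolve_left (not_not.2 rfl), eq_comm (a := (0 : F))]
  rcases eq_or_ne c 0 with rfl | hc
  · simp [hz]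
  have hiff : ∀ a : Fˣ, z * a = c ↔ a = Units.mk0 (c / z) (div_ne_zero hc hz) := by
    intro a
    rw [Units.ext_iff, Units.val_mk0, eq_div_iff hz, mul_comm]
  simp only [hiff, Fintype.sum_ite_eq', hz, hc, or_self, if_false]

/-- The number of points `[s : t] ∈ ℙ¹(F)` with `w s = y t` and `z s = -x t`, the three terms
counting `[1 : 0]`, `[0 : 1]` and `[a : 1]` with `a ∈ Fˣ`. It is `0`, `1` or `|F| + 1` according as
the matrix `!![w, -y; z, x]` has rank `2`, `1` or `0`, so it is symmetric in `w` and `x`. -/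
def projKernelCount [AddCommMonoidWithOne R] (w x y z : F) : R :=
  (if w = 0 ∧ z = 0 then 1 else 0) + (if x = 0 ∧ y = 0 then 1 else 0) +
    ∑ a : Fˣ, if y = w * a ∧ z * a = -x then 1 else 0

theorem projKernelCount_zero_left [AddCommMonoidWithOne R] {x : F} (hx : x ≠ 0) (y z : F) :
    projKernelCount (R := R) 0 x y z = projKernelCount x 0 y z := by
  have h₁ : ∀ a : Fˣ, (y = 0 * (a : F) ∧ z * a = -x) ↔ y = 0 ∧ z * a = -x := by simp
  have h₂ : ∀ a : Fˣ, (y = x * (a : F) ∧ z * a = -0) ↔ z = 0 ∧ x * a = y := by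
    simp [eq_comm (a := y), and_comm]
  simp only [projKernelCount, h₁, h₂, ite_and, Finset.sum_ite_irrel,
    sum_units_ite_mul_eq (Or.inr (neg_ne_zero.2 hx)), sum_units_ite_mul_eq (Or.inl hx)]
  by_cases hy : y = 0 <;> by_cases hz : z = 0 <;> simp [hx, hy, hz]

theorem projKernelCount_comm [AddCommMonoidWithOne R] (w x y z : F) :
    projKernelCount (R := R) w x y z = projKernelCount x w y z := by
  rcases eq_or_ne w 0 with rfl | hw <;> rcases eq_or_ne x 0 with rfl | hx
  · rfl
  · exact projKernelCount_zero_left hx y z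
  · exact (projKernelCount_zero_left hw y z).symm
  simp only [projKernelCount, hw, hx, false_and, if_false, zero_add]
  refine Fintype.sum_equiv (Equiv.mulLeft (Units.mk0 (w / x) (div_ne_zero hw hx))) _ _ ?_
  intro a
  simp only [Equiv.coe_mulLeft, Units.val_mul, Units.val_mk0]
  have e₁ : x * (w / x * a) = w * a := by field_simp
  have e₂ : z * (w / x * a) = -w ↔ z * a = -x := by
    rw [mul_left_comm, show -w = w / x * -x by field_simp, mul_right_inj' (div_ne_zero hw hx)]
  simp only [e₁, e₂]

theorem residue_relation [AddCommGroupWithOne R] (w x y z : F) :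
    (if x = 0 ∧ z = 0 then (1 : R) else 0) - (if x = 0 ∧ y = 0 then 1 else 0)
      - (if w = 0 ∧ z = 0 then 1 else 0) + (if w = 0 ∧ y = 0 then 1 else 0)
      + ∑ a : Fˣ, (-(if y = w * a ∧ z * a = -x then 1 else 0)
        + (if y = x * a ∧ z * a = -w then 1 else 0)) = 0 := by
  have := projKernelCount_comm (R := R) w x y z
  rw [projKernelCount, projKernelCount] at this
  rw [Finset.sum_add_distrib, Finset.sum_neg_distrib]
  refine Eq.trans ?_ (sub_eq_zero.2 this.symm)
  abel

end Count

theorem Nat.div_eq_mul_div_mul {N p d : ℕ} (h : p * d ∣ N) : N / d = p * (N / (p * d)) := by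
  rw [mul_comm p d, ← Nat.div_div_eq_div_mul,
    Nat.mul_div_cancel' (Nat.dvd_div_of_mul_dvd (by rwa [mul_comm]))]

theorem Nat.div_mul_dvd {N p d : ℕ} (h : p * d ∣ N) : N / (p * d) * p ∣ N :=
  ⟨d, by rw [mul_assoc, Nat.div_mul_cancel h]⟩

theorem Hxz_eq_prod (M x z : ℕ) :
    Hxz M x z = (zmultiples (x : ZMod M)).prod (zmultiples (z : ZMod M)) := by
  ext ⟨u, v⟩
  simp only [Hxz, mem_closure_pair, mem_prod, mem_zmultiples_iff, Prod.ext_iff, Prod.fst_add,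
    Prod.snd_add, Prod.smul_fst, Prod.smul_snd, smul_zero, add_zero, zero_add]
  exact ⟨fun ⟨m, n, hu, hv⟩ => ⟨⟨m, hu⟩, ⟨n, hv⟩⟩, fun ⟨⟨m, hu⟩, ⟨n, hv⟩⟩ => ⟨m, n, hu, hv⟩⟩

theorem mem_Hxz_one_self_iff {p : ℕ} (y z : ZMod p) : (y, z) ∈ Hxz p 1 p ↔ z = 0 := by
  simp only [Hxz_eq_prod, ZMod.natCast_self, zmultiples_zero_eq_bot, mem_prod, mem_bot,
    Nat.cast_one, and_iff_right_iff_imp]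
  exact fun _ => mem_zmultiples_iff.2 ⟨(y.cast : ℤ), by simp⟩

theorem mem_Hxz_self_one_iff {p : ℕ} (y z : ZMod p) : (y, z) ∈ Hxz p p 1 ↔ y = 0 := by
  simp only [Hxz_eq_prod, ZMod.natCast_self, zmultiples_zero_eq_bot, mem_prod, mem_bot,
    Nat.cast_one, and_iff_left_iff_imp]
  exact fun _ => mem_zmultiples_iff.2 ⟨(z.cast : ℤ), by simp⟩

def Hgraph (N p d : ℕ) (s t : ZMod p × ZMod p) : AddSubgroup (DD N p) :=
  closure {(((d : ZMod N), 0), s), ((0, ((N / (p * d) : ℕ) : ZMod N)), t)}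

section Residues

variable {N : ℕ} [NeZero N]

theorem intCast_eq_of_mul_natCast_eq {d p : ℕ} (h : d * p ∣ N) {m m' : ℤ}
    (hm : (m * d : ZMod N) = m' * d) : (m : ZMod p) = m' := by
  have hd : (d : ℤ) ≠ 0 := by
    intro h0
    exact NeZero.ne N (Nat.eq_zero_of_zero_dvd (by simpa [Int.natCast_eq_zero.1 h0] using h))
  have hN : (N : ℤ) ∣ (m' - m) * d := by
    rw [← ZMod.intCast_zmod_eq_zero_iff_dvd]
    push_cast
    rw [sub_mul, hm, sub_self]
  rw [ZMod.intCast_eq_intCast_iff_dvd_sub]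
  refine Int.dvd_of_mul_dvd_mul_right hd ?_
  rw [mul_comm]
  exact (Int.natCast_dvd_natCast.2 h).trans (by exact_mod_cast hN)

theorem intCast_mul_mem_zmultiples_iff {d p : ℕ} (h : d * p ∣ N) (m : ℤ) :
    (m * d : ZMod N) ∈ zmultiples ((p * d : ℕ) : ZMod N) ↔ (m : ZMod p) = 0 := by
  rw [mem_zmultiples_iff]
  constructor
  · rintro ⟨k, hk⟩
    have := intCast_eq_of_mul_natCast_eq h (m := k * p) (m' := m) (by rw [← hk]; push_cast; ring)
    rw [← this]
    push_cast
    rw [ZMod.natCast_self, mul_zero]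
  · intro hm
    obtain ⟨k, rfl⟩ := (ZMod.intCast_zmod_eq_zero_iff_dvd m p).1 hm
    exact ⟨k, by push_cast; ring⟩

theorem coords_mem_Hxz_div_iff {p d : ℕ} (h : p * d ∣ N) (m n : ℤ) :
    ((m * d : ZMod N), (n * (N / (p * d) : ℕ) : ZMod N)) ∈ Hxz N d (N / d) ↔
      (n : ZMod p) = 0 := by
  rw [Hxz_eq_prod, mem_prod, Nat.div_eq_mul_div_mul h,
    intCast_mul_mem_zmultiples_iff (Nat.div_mul_dvd h)]
  exact and_iff_right (mem_zmultiples_iff.2 ⟨m, by simp⟩)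

theorem coords_mem_Hxz_mul_iff {p d : ℕ} (h : p * d ∣ N) (m n : ℤ) :
    ((m * d : ZMod N), (n * (N / (p * d) : ℕ) : ZMod N)) ∈ Hxz N (p * d) (N / (p * d)) ↔
      (m : ZMod p) = 0 := by
  rw [Hxz_eq_prod, mem_prod, intCast_mul_mem_zmultiples_iff (by rwa [mul_comm])]
  exact and_iff_left (mem_zmultiples_iff.2 ⟨n, by simp⟩)

theorem coords_mem_Hgraph_iff {p d : ℕ} (h : p * d ∣ N) (s t : ZMod p × ZMod p) (m n : ℤ)
    (y z : ZMod p) :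
    (((m * d : ZMod N), (n * (N / (p * d) : ℕ) : ZMod N)), (y, z)) ∈ Hgraph N p d s t ↔
      (y, z) = (m : ZMod p) • s + (n : ZMod p) • t := by
  rw [Hgraph, mem_closure_pair]
  simp only [Prod.smul_mk, Prod.mk_add_mk, smul_zero, add_zero, zero_add, Prod.mk.injEq]
  constructor
  · rintro ⟨m', n', ⟨hm, hn⟩, hyz⟩
    rw [zsmul_eq_mul] at hm hn
    rw [← hyz, ← Int.cast_smul_eq_zsmul (ZMod p), ← Int.cast_smul_eq_zsmul (ZMod p),
      intCast_eq_of_mul_natCast_eq (by rwa [mul_comm] at h) hm,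
      intCast_eq_of_mul_natCast_eq (Nat.div_mul_dvd h) hn]
  · intro hyz
    exact ⟨m, n, ⟨zsmul_eq_mul _ _, zsmul_eq_mul _ _⟩, by simp [hyz, Int.cast_smul_eq_zsmul]⟩

end Residues

theorem closure_insert_insert_zero_zero {G : Type*} [AddGroup G] (a b : G) :
    closure ({a, b, 0, 0} : Set G) = closure {a, b} := by
  rw [← closure_insert_zero {a, b}]
  congr 1
  ext
  simp only [Set.mem_insert_iff, Set.mem_singleton_iff]
  tauto

theorem H5_eq_Hgraph (N p d : ℕ) (a : (ZMod p)ˣ) :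
    H5 N p d a = Hgraph N p d ((a : ZMod p), 0) (0, -((a⁻¹ : (ZMod p)ˣ) : ZMod p)) := by
  simp only [H5, Hgraph, ZMod.natCast_self, Prod.mk_zero_zero, closure_insert_insert_zero_zero]

theorem H6_eq_Hgraph (N p d : ℕ) (a : (ZMod p)ˣ) :
    H6 N p d a = Hgraph N p d (0, -((a⁻¹ : (ZMod p)ˣ) : ZMod p)) ((a : ZMod p), 0) := by
  simp only [H6, Hgraph, ZMod.natCast_self, Prod.mk_zero_zero, closure_insert_insert_zero_zero]

theorem Hgraph_le (N p d : ℕ) (s t : ZMod p × ZMod p) :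
    Hgraph N p d s t ≤ (Hxz N d (N / (p * d))).prod ⊤ := by
  rw [Hgraph, closure_le]
  rintro _ (rfl | rfl) <;>
    simp [Hxz_eq_prod, mem_prod, zero_mem, mem_zmultiples]

theorem Hxz_div_prod_le {N p d : ℕ} (h : p * d ∣ N) (S : AddSubgroup (ZMod p × ZMod p)) :
    (Hxz N d (N / d)).prod S ≤ (Hxz N d (N / (p * d))).prod ⊤ := by
  refine prod_mono ?_ le_top
  rw [Hxz_eq_prod, Hxz_eq_prod, Nat.div_eq_mul_div_mul h]
  exact prod_mono le_rfl (zmultiples_le_of_mem (mem_zmultiples_iff.2 ⟨p, by simp⟩))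

theorem Hxz_mul_prod_le (N p d : ℕ) (S : AddSubgroup (ZMod p × ZMod p)) :
    (Hxz N (p * d) (N / (p * d))).prod S ≤ (Hxz N d (N / (p * d))).prod ⊤ := by
  refine prod_mono ?_ le_top
  rw [Hxz_eq_prod, Hxz_eq_prod]
  exact prod_mono (zmultiples_le_of_mem (mem_zmultiples_iff.2 ⟨p, by simp⟩)) le_rfl

theorem exists_eq_coords_of_mem {N p d : ℕ} {γ : DD N p}
    (hγ : γ ∈ (Hxz N d (N / (p * d))).prod ⊤) :
    ∃ (m n : ℤ) (y z : ZMod p),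
      γ = (((m * d : ZMod N), (n * (N / (p * d) : ℕ) : ZMod N)), (y, z)) := by
  obtain ⟨⟨u, v⟩, y, z⟩ := γ
  rw [mem_prod, Hxz_eq_prod, mem_prod, mem_zmultiples_iff, mem_zmultiples_iff] at hγ
  obtain ⟨⟨⟨m, rfl⟩, ⟨n, rfl⟩⟩, -⟩ := hγ
  exact ⟨m, n, y, z, by simp [zsmul_eq_mul]⟩

theorem vH_apply {D : Type*} (S : Set D) [DecidablePred (· ∈ S)] (γ : D) :
    vH S γ = if γ ∈ S then 1 else 0 :=
  Set.indicator_apply S 1 γ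

/-- the linear relation
`v^{H⁽¹⁾} − v^{H⁽²⁾} − v^{H⁽³⁾} + v^{H⁽⁴⁾} + ∑_{a ∈ (ℤ/pℤ)*} (−v^{H⁽⁵⁾_a} + v^{H⁽⁶⁾_a}) = 0`
in `ℂ[(ℤ/Nℤ)² ⊕ (ℤ/pℤ)²]` among characteristic functions of self-dual isotropic
subgroups. -/
theorem stmt15 (N p : ℕ) [NeZero N] [NeZero p] (hp : p.Prime) (hpN : p ∣ N)
    (d' : ℕ) (hd' : d' ∣ N / p) :
    vH (((Hxz N d' (N / d')).prod (Hxz p 1 p) : AddSubgroup (DD N p)) : Set (DD N p))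
      - vH (((Hxz N d' (N / d')).prod (Hxz p p 1) : AddSubgroup (DD N p)) : Set (DD N p))
      - vH (((Hxz N (p * d') (N / (p * d'))).prod (Hxz p 1 p) : AddSubgroup (DD N p)) :
          Set (DD N p))
      + vH (((Hxz N (p * d') (N / (p * d'))).prod (Hxz p p 1) : AddSubgroup (DD N p)) :
          Set (DD N p))
      + ∑ a : (ZMod p)ˣ,
          (-vH ((H5 N p d' a : AddSubgroup (DD N p)) : Set (DD N p))
            + vH ((H6 N p d' a : AddSubgroup (DD N p)) : Set (DD N p)))
      = 0 := by
  classical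
  have : Fact p.Prime := ⟨hp⟩
  have h : p * d' ∣ N := Nat.mul_dvd_of_dvd_div hpN hd'
  funext γ
  simp only [Pi.add_apply, Pi.sub_apply, Finset.sum_apply, Pi.neg_apply, Pi.zero_apply, vH_apply,
    SetLike.mem_coe]
  by_cases hγ : γ ∈ (Hxz N d' (N / (p * d'))).prod ⊤
  · obtain ⟨m, n, y, z, rfl⟩ := exists_eq_coords_of_mem hγ
    simp only [mem_prod, coords_mem_Hxz_div_iff h, coords_mem_Hxz_mul_iff h, mem_Hxz_one_self_iff,
      mem_Hxz_self_one_iff, H5_eq_Hgraph, H6_eq_Hgraph, coords_mem_Hgraph_iff h, Prod.smul_mk,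
      Prod.mk_add_mk, Prod.mk.injEq, smul_eq_mul, mul_zero, add_zero, zero_add, mul_neg,
      ← neg_mul, Units.eq_mul_inv_iff_mul_eq]
    exact residue_relation _ _ _ _
  · have hH : ∀ H, H ≤ (Hxz N d' (N / (p * d'))).prod ⊤ → γ ∉ H := fun H hle hH => hγ (hle hH)
    simp only [hH _ (Hxz_div_prod_le h _), hH _ (Hxz_mul_prod_le _ _ _ _), H5_eq_Hgraph,
      H6_eq_Hgraph, hH _ (Hgraph_le _ _ _ _ _), if_false, neg_zero, add_zero, sub_zero,
      Finset.sum_const_zero]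
end
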